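/- For every natural number n ≥ 1 the following identities hold in the field ℚ(X,Z) of rational functions: ∑_{w ∈ S_n} X^{σ(w) − l(w)} · Z^{maj(w)} = ∑_{w ∈ S_n} X^{σ(w) − l(w)} · Z^{rmaj(w)} = ∏_{i=0}^{n−1} (1 − (X^{i}·Z)^{n−i}) / (1 − X^{i}·Z). -/

import Mathlib

/-!
STATEMENT 10: Proposition `pro:S_n` — the joint distribution of `(σ - l, maj)` and
`(σ - l, rmaj)` on the symmetric group `S_n`, as identities in ℚ(X,Z).
-/

noncomputable section

open scoped Classical

/-- The set `{1, …, n}`, as a type. -/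
abbrev SBox (n : ℕ) : Finset ℕ := Finset.Icc 1 n

/-- The inversion number `l(w) = #{(i,j) : 1 ≤ i < j ≤ n, w(i) > w(j)}`
(the Coxeter length of `w`). -/
def slen (n : ℕ) (w : Equiv.Perm (SBox n)) : ℕ :=
  (Finset.univ.filter
    (fun p : SBox n × SBox n => p.1.1 < p.2.1 ∧ (w p.2).1 < (w p.1).1)).card

/-- The descent set `D(w) = {i ∈ {1,…,n-1} : w(i) > w(i+1)}`, as a subset of ℕ. -/
def sdesc (n : ℕ) (w : Equiv.Perm (SBox n)) : Finset ℕ :=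
  (Finset.univ.filter
    (fun a : SBox n => ∃ b : SBox n, b.1 = a.1 + 1 ∧ (w b).1 < (w a).1)).image
    (fun a => a.1)

/-- `σ(w) = ∑_{i ∈ D(w)} i·(n - i)`. -/
def ssigma (n : ℕ) (w : Equiv.Perm (SBox n)) : ℕ :=
  ∑ i ∈ sdesc n w, i * (n - i)

/-- The major index `maj(w) = ∑_{i ∈ D(w)} i`. -/
def smaj (n : ℕ) (w : Equiv.Perm (SBox n)) : ℕ :=
  ∑ i ∈ sdesc n w, i

/-- The reverse major index `rmaj(w) = ∑_{i ∈ D(w)} (n - i)`. -/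
def srmaj (n : ℕ) (w : Equiv.Perm (SBox n)) : ℕ :=
  ∑ i ∈ sdesc n w, (n - i)

/-- The field ℚ(X,Z). -/
abbrev F2 : Type := FractionRing (MvPolynomial (Fin 2) ℚ)

def XX : F2 := algebraMap (MvPolynomial (Fin 2) ℚ) F2 (MvPolynomial.X 0)
def ZZ : F2 := algebraMap (MvPolynomial (Fin 2) ℚ) F2 (MvPolynomial.X 1)

/-!
Every `w ∈ S_{n+1}` factors uniquely as `w = c^k · ι(u)` with `u ∈ S_n`, `0 ≤ k ≤ n`, where
`ι(u)` extends `u` by fixing `n + 1` and `c` relabels the values by `1 ↦ n + 1`, `v ↦ v - 1`.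
The embedding `ι` keeps descents and inversions, so it keeps `maj` and `l` and raises `σ` by
`maj`.
If the value `1` sits at a position `p ≠ n + 1`, applying `c` moves the descent `p - 1` (if any)
to `p`: `maj` grows by one, while `σ` and `l` both grow by `n + 2 - 2p`. Hence the generating
function satisfies `F_{n+1}(X, Z) = F_n(X, XZ) · (1 + Z + ⋯ + Z^n)`, which unrolls into the
product. Conjugation by `i ↦ n + 1 - i` preserves `σ` and `l` and turns `rmaj` into `maj`.
-/

namespace SBox

lemma bounds {m : ℕ} (a : SBox m) : 1 ≤ a.1 ∧ a.1 ≤ m := Finset.mem_Icc.1 a.2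

lemma mem_sdesc {m d : ℕ} {w : Equiv.Perm (SBox m)} :
    d ∈ sdesc m w ↔ ∃ a b : SBox m, a.1 = d ∧ b.1 = d + 1 ∧ (w b).1 < (w a).1 := by
  simp only [sdesc, Finset.mem_image, Finset.mem_filter, Finset.mem_univ, true_and]
  constructor
  · rintro ⟨a, ⟨b, hb, hlt⟩, rfl⟩
    exact ⟨a, b, rfl, hb, hlt⟩
  · rintro ⟨a, b, rfl, hb, hlt⟩
    exact ⟨a, ⟨b, hb, hlt⟩, rfl⟩

lemma bounds_of_mem_sdesc {m d : ℕ} {w : Equiv.Perm (SBox m)} (h : d ∈ sdesc m w) :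
    1 ≤ d ∧ d + 1 ≤ m := by
  obtain ⟨a, b, rfl, hb, -⟩ := mem_sdesc.1 h
  have := bounds a
  have := bounds b
  omega

section Reverse

variable {m : ℕ}

def reverse (m : ℕ) : Equiv.Perm (SBox m) :=
  Function.Involutive.toPerm
    (fun i => ⟨m + 1 - i.1, Finset.mem_Icc.2 (by have := bounds i; omega)⟩)
    fun i => Subtype.ext (by have := bounds i; simp only; omega)

@[simp]
lemma reverse_apply_val (i : SBox m) : (reverse m i).1 = m + 1 - i.1 := rfl

@[simp]
lemma reverse_reverse (i : SBox m) : reverse m (reverse m i) = i :=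
  Function.Involutive.toPerm_involutive _ i

lemma reverse_mul_mul_reverse_involutive :
    Function.Involutive fun w : Equiv.Perm (SBox m) => reverse m * w * reverse m := by
  intro w
  ext i
  simp

lemma sub_mem_sdesc_reverse_mul_mul_reverse {w : Equiv.Perm (SBox m)} {d : ℕ}
    (h : d ∈ sdesc m w) : m - d ∈ sdesc m (reverse m * w * reverse m) := by
  obtain ⟨a, b, ha, hb, hlt⟩ := mem_sdesc.1 h
  have := bounds_of_mem_sdesc h
  have := bounds (w a)
  have := bounds (w b)
  refine mem_sdesc.2 ⟨reverse m b, reverse m a, ?_, ?_, ?_⟩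
  · simp only [reverse_apply_val]; omega
  · simp only [reverse_apply_val]; omega
  · simp only [Equiv.Perm.mul_apply, reverse_reverse, reverse_apply_val]; omega

lemma sum_sdesc_reverse_mul_mul_reverse {M : Type*} [AddCommMonoid M] (w : Equiv.Perm (SBox m))
    (f : ℕ → M) :
    ∑ d ∈ sdesc m (reverse m * w * reverse m), f d = ∑ d ∈ sdesc m w, f (m - d) := by
  refine Finset.sum_nbij' (m - ·) (m - ·) (fun d hd => ?_) (fun d hd => ?_)
    (fun d hd => ?_) (fun d hd => ?_) (fun d hd => ?_)
  · simpa only [reverse_mul_mul_reverse_involutive w] using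
      sub_mem_sdesc_reverse_mul_mul_reverse hd
  · exact sub_mem_sdesc_reverse_mul_mul_reverse hd
  all_goals have := bounds_of_mem_sdesc hd
  · omega
  · omega
  · congr 1; omega

lemma smaj_reverse_mul_mul_reverse (w : Equiv.Perm (SBox m)) :
    smaj m (reverse m * w * reverse m) = srmaj m w :=
  sum_sdesc_reverse_mul_mul_reverse w id

lemma ssigma_reverse_mul_mul_reverse (w : Equiv.Perm (SBox m)) :
    ssigma m (reverse m * w * reverse m) = ssigma m w := by
  rw [ssigma, sum_sdesc_reverse_mul_mul_reverse]
  refine Finset.sum_congr rfl fun d hd => ?_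
  have := bounds_of_mem_sdesc hd
  rw [Nat.sub_sub_self (by omega), mul_comm]

lemma slen_reverse_mul_mul_reverse (w : Equiv.Perm (SBox m)) :
    slen m (reverse m * w * reverse m) = slen m w := by
  unfold slen
  refine Finset.card_equiv ((Equiv.prodComm _ _).trans ((reverse m).prodCongr (reverse m)))
    fun q => ?_
  have := bounds q.1
  have := bounds q.2
  have := bounds (w (reverse m q.1))
  have := bounds (w (reverse m q.2))
  rw [Finset.mem_filter, Finset.mem_filter]
  simp only [Finset.mem_univ, true_and, Equiv.trans_apply, Equiv.prodComm_apply, Prod.fst_swap,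
    Prod.snd_swap, Equiv.prodCongr_apply, Prod.map, Equiv.Perm.mul_apply, reverse_apply_val]
  omega

end Reverse

section Inversions

variable {m : ℕ}

lemma card_filter_val_lt {k : ℕ} (hk : k ≤ m + 1) :
    (Finset.univ.filter fun i : SBox m => i.1 < k).card = k - 1 := by
  rw [← Finset.card_map (Function.Embedding.subtype _), ← Nat.card_Ico 1 k]
  congr 1
  ext i
  simp only [Finset.univ_eq_attach, Finset.mem_map, Finset.mem_filter, Finset.mem_attach,
    true_and, Function.Embedding.subtype_apply, Subtype.exists, Finset.mem_Icc, exists_and_left,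
    exists_prop, exists_eq_right_right, Finset.mem_Ico]
  omega

lemma card_filter_lt_val (k : ℕ) :
    (Finset.univ.filter fun i : SBox m => k < i.1).card = m - k := by
  rw [← Finset.card_map (Function.Embedding.subtype _), ← Nat.card_Ioc k m]
  congr 1
  ext i
  simp only [Finset.univ_eq_attach, Finset.mem_map, Finset.mem_filter, Finset.mem_attach,
    true_and, Function.Embedding.subtype_apply, Subtype.exists, Finset.mem_Icc, exists_and_left,
    exists_prop, exists_eq_right_right, Finset.mem_Ioc]
  omega

def inversions (w : Equiv.Perm (SBox m)) : Finset (SBox m × SBox m) :=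
  Finset.univ.filter fun q => q.1.1 < q.2.1 ∧ (w q.2).1 < (w q.1).1

lemma slen_eq_card_inversions (w : Equiv.Perm (SBox m)) : slen m w = (inversions w).card := rfl

def inversionsAvoiding (w : Equiv.Perm (SBox m)) (p : SBox m) : Finset (SBox m × SBox m) :=
  ((inversions w).filter fun q => ¬q.2 = p).filter fun q => ¬q.1 = p

lemma slen_eq_add_add_card_inversionsAvoiding (w : Equiv.Perm (SBox m)) (p : SBox m) :
    slen m w = (Finset.univ.filter fun i : SBox m => i.1 < p.1 ∧ (w p).1 < (w i).1).card
      + (Finset.univ.filter fun j : SBox m => p.1 < j.1 ∧ (w j).1 < (w p).1).card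
      + (inversionsAvoiding w p).card := by
  have ending_at_p : ((inversions w).filter fun q => q.2 = p).card
      = (Finset.univ.filter fun i : SBox m => i.1 < p.1 ∧ (w p).1 < (w i).1).card := by
    refine Finset.card_nbij' Prod.fst (·, p) (fun q hq => ?_) (fun i hi => ?_)
      (fun q hq => ?_) (fun i _ => rfl)
    · obtain ⟨hinv, rfl⟩ := Finset.mem_filter.1 hq
      simpa [inversions] using hinv
    · simpa [inversions] using hi
    · exact Prod.ext rfl (Finset.mem_filter.1 hq).2.symm
  have starting_at_p : (((inversions w).filter fun q => ¬q.2 = p).filter fun q => q.1 = p).card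
      = (Finset.univ.filter fun j : SBox m => p.1 < j.1 ∧ (w j).1 < (w p).1).card := by
    refine Finset.card_nbij' Prod.snd (p, ·) (fun q hq => ?_) (fun j hj => ?_)
      (fun q hq => ?_) (fun j _ => rfl)
    · obtain ⟨hinv, rfl⟩ := Finset.mem_filter.1 hq
      simpa [inversions] using (Finset.mem_filter.1 hinv).1
    · have hjp : ¬j = p := fun h => (h ▸ (Finset.mem_filter.1 hj).2.1).false
      simpa [inversions, hjp] using hj
    · exact Prod.ext (Finset.mem_filter.1 hq).2.symm rfl
  rw [slen_eq_card_inversions,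
    ← Finset.card_filter_add_card_filter_not (s := inversions w) (fun q => q.2 = p),
    ← Finset.card_filter_add_card_filter_not (s := (inversions w).filter fun q => ¬q.2 = p)
      (fun q => q.1 = p), ending_at_p, starting_at_p, add_assoc]
  rfl

variable {w : Equiv.Perm (SBox m)} {p : SBox m}

lemma one_lt_apply_of_ne (hp : (w p).1 = 1) {i : SBox m} (hi : i ≠ p) : 1 < (w i).1 := by
  have := bounds (w i)
  have : (w i).1 ≠ 1 := fun h => hi (w.injective (Subtype.ext (h.trans hp.symm)))
  omega

lemma slen_of_apply_eq_one (hp : (w p).1 = 1) :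
    slen m w = (p.1 - 1) + (inversionsAvoiding w p).card := by
  have hbefore : (Finset.univ.filter fun i : SBox m => i.1 < p.1 ∧ (w p).1 < (w i).1)
      = Finset.univ.filter fun i : SBox m => i.1 < p.1 := by
    refine Finset.filter_congr fun i _ => ⟨And.left, fun hi => ⟨hi, ?_⟩⟩
    rw [hp]
    exact one_lt_apply_of_ne hp (fun h => (h ▸ hi).false)
  have hafter : (Finset.univ.filter fun j : SBox m => p.1 < j.1 ∧ (w j).1 < (w p).1) = ∅ :=
    Finset.filter_eq_empty_iff.2 fun j _ h => by have := bounds (w j); omega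
  rw [slen_eq_add_add_card_inversionsAvoiding, hbefore, hafter,
    card_filter_val_lt (by have := bounds p; omega), Finset.card_empty, add_zero]

lemma slen_of_apply_eq_top (hp : (w p).1 = m) :
    slen m w = (m - p.1) + (inversionsAvoiding w p).card := by
  have hbefore : (Finset.univ.filter fun i : SBox m => i.1 < p.1 ∧ (w p).1 < (w i).1) = ∅ :=
    Finset.filter_eq_empty_iff.2 fun i _ h => by have := bounds (w i); omega
  have hafter : (Finset.univ.filter fun j : SBox m => p.1 < j.1 ∧ (w j).1 < (w p).1)
      = Finset.univ.filter fun j : SBox m => p.1 < j.1 := by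
    refine Finset.filter_congr fun j _ => ⟨And.left, fun hj => ⟨hj, ?_⟩⟩
    have hjp : (w j).1 ≠ m := fun h =>
      (show p ≠ j from fun h' => (h' ▸ hj).false) (w.injective (Subtype.ext (hp.trans h.symm)))
    have := bounds (w j)
    omega
  rw [slen_eq_add_add_card_inversionsAvoiding, hbefore, hafter, card_filter_lt_val,
    Finset.card_empty, zero_add]

end Inversions

section Lift

variable {n : ℕ}

def last (n : ℕ) : SBox (n + 1) := ⟨n + 1, Finset.mem_Icc.2 ⟨by omega, le_rfl⟩⟩

def castSucc (i : SBox n) : SBox (n + 1) :=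
  ⟨i.1, Finset.mem_Icc.2 ⟨(bounds i).1, (bounds i).2.trans n.le_succ⟩⟩

@[simp] lemma last_val : (last n).1 = n + 1 := rfl

@[simp] lemma castSucc_val (i : SBox n) : (castSucc i).1 = i.1 := rfl

lemma castSucc_injective : Function.Injective (castSucc (n := n)) :=
  fun _ _ h => Subtype.ext (congrArg Subtype.val h :)

lemma eq_last_or_exists_castSucc (a : SBox (n + 1)) : a = last n ∨ ∃ i, a = castSucc i := by
  by_cases h : a.1 ≤ n
  · exact Or.inr ⟨⟨a.1, Finset.mem_Icc.2 ⟨(bounds a).1, h⟩⟩, rfl⟩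
  · exact Or.inl (Subtype.ext (by have := bounds a; simp only [last_val]; omega))

def castSuccEquiv (n : ℕ) : SBox n ≃ {a : SBox (n + 1) // a ≠ last n} where
  toFun i := ⟨castSucc i, fun h => by have := bounds i; simp [Subtype.ext_iff] at h; omega⟩
  invFun a := ⟨a.1.1, Finset.mem_Icc.2 ⟨(bounds a.1).1, by
    have := bounds a.1
    have := a.2
    simp only [ne_eq, Subtype.ext_iff, last_val] at this
    omega⟩⟩
  left_inv _ := rfl
  right_inv _ := rfl

def liftPerm (u : Equiv.Perm (SBox n)) : Equiv.Perm (SBox (n + 1)) :=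
  u.extendDomain (castSuccEquiv n)

@[simp]
lemma liftPerm_apply_castSucc (u : Equiv.Perm (SBox n)) (i : SBox n) :
    liftPerm u (castSucc i) = castSucc (u i) :=
  u.extendDomain_apply_image (castSuccEquiv n) i

@[simp]
lemma liftPerm_apply_last (u : Equiv.Perm (SBox n)) : liftPerm u (last n) = last n :=
  u.extendDomain_apply_not_subtype _ (by simp)

lemma liftPerm_injective : Function.Injective (liftPerm (n := n)) :=
  Equiv.Perm.extendDomainHom_injective (castSuccEquiv n)

lemma sdesc_liftPerm (u : Equiv.Perm (SBox n)) : sdesc (n + 1) (liftPerm u) = sdesc n u := by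
  ext d
  simp only [mem_sdesc]
  constructor
  · rintro ⟨a, b, ha, hb, hlt⟩
    rcases eq_last_or_exists_castSucc b with rfl | ⟨j, rfl⟩
    · have := bounds (liftPerm u a)
      simp only [liftPerm_apply_last, last_val] at hlt
      omega
    rcases eq_last_or_exists_castSucc a with rfl | ⟨i, rfl⟩
    · have := bounds j
      simp only [last_val, castSucc_val] at ha hb
      omega
    exact ⟨i, j, ha, hb, by simpa using hlt⟩
  · rintro ⟨i, j, hi, hj, hlt⟩
    exact ⟨castSucc i, castSucc j, hi, hj, by simpa using hlt⟩

lemma slen_liftPerm (u : Equiv.Perm (SBox n)) : slen (n + 1) (liftPerm u) = slen n u := by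
  unfold slen
  symm
  refine Finset.card_bij (fun q _ => (castSucc q.1, castSucc q.2)) (fun q hq => ?_)
    (fun q _ q' _ h => ?_) (fun q hq => ?_)
  · simpa only [Finset.mem_filter, Finset.mem_univ, true_and, liftPerm_apply_castSucc,
      castSucc_val] using hq
  · simp only [Prod.mk.injEq] at h
    exact Prod.ext (castSucc_injective h.1) (castSucc_injective h.2)
  · simp only [Finset.mem_filter, Finset.mem_univ, true_and] at hq
    obtain ⟨hlt, hinv⟩ := hq
    rcases eq_last_or_exists_castSucc q.2 with h2 | ⟨j, h2⟩
    · have := bounds (liftPerm u q.1)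
      simp only [h2, liftPerm_apply_last, last_val] at hinv
      omega
    rcases eq_last_or_exists_castSucc q.1 with h1 | ⟨i, h1⟩
    · have := bounds j
      simp only [h1, h2, last_val, castSucc_val] at hlt
      omega
    refine ⟨(i, j), ?_, Prod.ext h1.symm h2.symm⟩
    simpa only [Finset.mem_filter, Finset.mem_univ, true_and, h1, h2, liftPerm_apply_castSucc,
      castSucc_val] using And.intro hlt hinv

lemma smaj_liftPerm (u : Equiv.Perm (SBox n)) : smaj (n + 1) (liftPerm u) = smaj n u := by
  rw [smaj, smaj, sdesc_liftPerm]

/-- Lifting raises each weight `i (n - i)` of a descent `i` by `i`. -/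
lemma ssigma_liftPerm (u : Equiv.Perm (SBox n)) :
    ssigma (n + 1) (liftPerm u) = ssigma n u + smaj n u := by
  rw [ssigma, ssigma, smaj, sdesc_liftPerm, ← Finset.sum_add_distrib]
  refine Finset.sum_congr rfl fun d hd => ?_
  have := bounds_of_mem_sdesc hd
  rw [show n + 1 - d = n - d + 1 by omega, Nat.mul_succ]

end Lift

section Rotate

variable {n : ℕ}

def rotate (n : ℕ) : Equiv.Perm (SBox (n + 1)) where
  toFun i := ⟨if i.1 = 1 then n + 1 else i.1 - 1,
    Finset.mem_Icc.2 (by have := bounds i; split_ifs <;> omega)⟩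
  invFun i := ⟨if i.1 = n + 1 then 1 else i.1 + 1,
    Finset.mem_Icc.2 (by have := bounds i; split_ifs <;> omega)⟩
  left_inv i := Subtype.ext (by have := bounds i; dsimp only; split_ifs <;> omega)
  right_inv i := Subtype.ext (by have := bounds i; dsimp only; split_ifs <;> omega)

lemma rotate_apply_val (i : SBox (n + 1)) :
    (rotate n i).1 = if i.1 = 1 then n + 1 else i.1 - 1 := rfl

variable {w : Equiv.Perm (SBox (n + 1))} {p : SBox (n + 1)}

lemma rotate_mul_apply_self (hp : (w p).1 = 1) : ((rotate n * w) p).1 = n + 1 := by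
  rw [Equiv.Perm.mul_apply, rotate_apply_val, if_pos hp]

lemma rotate_mul_apply_of_ne (hp : (w p).1 = 1) {i : SBox (n + 1)} (hi : i ≠ p) :
    ((rotate n * w) i).1 = (w i).1 - 1 := by
  rw [Equiv.Perm.mul_apply, rotate_apply_val, if_neg (one_lt_apply_of_ne hp hi).ne']

lemma sdesc_rotate_mul (hp : (w p).1 = 1) (hpn : p.1 ≠ n + 1) :
    sdesc (n + 1) (rotate n * w) = insert p.1 ((sdesc (n + 1) w).erase (p.1 - 1)) := by
  have := bounds p
  ext d
  rw [mem_sdesc, Finset.mem_insert, Finset.mem_erase, mem_sdesc]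
  constructor
  · rintro ⟨a, b, rfl, hb, hlt⟩
    by_cases hap : a = p
    · exact Or.inl (congrArg Subtype.val hap)
    have hbp : b ≠ p := by
      rintro rfl
      have := bounds ((rotate n * w) a)
      rw [rotate_mul_apply_self hp] at hlt
      omega
    have := one_lt_apply_of_ne hp hap
    have := one_lt_apply_of_ne hp hbp
    rw [rotate_mul_apply_of_ne hp hap, rotate_mul_apply_of_ne hp hbp] at hlt
    exact Or.inr ⟨fun h => hbp (Subtype.ext (by omega)), a, b, rfl, hb, by omega⟩
  · rintro (rfl | ⟨hdp, a, b, rfl, hb, hlt⟩)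
    · let b : SBox (n + 1) := ⟨p.1 + 1, Finset.mem_Icc.2 ⟨by omega, by omega⟩⟩
      have hbp : b ≠ p := fun h => by simp [b, Subtype.ext_iff] at h
      have := bounds (w b)
      refine ⟨p, b, rfl, rfl, ?_⟩
      rw [rotate_mul_apply_self hp, rotate_mul_apply_of_ne hp hbp]
      omega
    · have hap : a ≠ p := by
        rintro rfl
        have := bounds (w b)
        omega
      have hbp : b ≠ p := fun h => hdp (by rw [← h]; omega)
      have := one_lt_apply_of_ne hp hbp
      refine ⟨a, b, rfl, hb, ?_⟩
      rw [rotate_mul_apply_of_ne hp hap, rotate_mul_apply_of_ne hp hbp]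
      omega

/-- Rotating moves the descent `p - 1` (absent when `p = 1`) to `p`. -/
lemma sum_sdesc_rotate_mul {M : Type*} [AddCommMonoid M] (hp : (w p).1 = 1) (hpn : p.1 ≠ n + 1)
    (f : ℕ → M) (hf : f 0 = 0) :
    ∑ d ∈ sdesc (n + 1) (rotate n * w), f d + f (p.1 - 1)
      = ∑ d ∈ sdesc (n + 1) w, f d + f p.1 := by
  have hp_not_mem : p.1 ∉ sdesc (n + 1) w := fun h => by
    obtain ⟨a, b, ha, hb, hlt⟩ := mem_sdesc.1 h
    rw [show a = p from Subtype.ext ha, hp] at hlt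
    have := bounds (w b)
    omega
  rw [sdesc_rotate_mul hp hpn, Finset.sum_insert fun h => hp_not_mem (Finset.mem_of_mem_erase h),
    add_comm (f p.1), add_right_comm]
  congr 1
  by_cases hp1 : p.1 = 1
  · have h0 : 0 ∉ sdesc (n + 1) w := fun h => by have := bounds_of_mem_sdesc h; omega
    rw [hp1, Nat.sub_self, Finset.erase_eq_of_notMem h0, hf, add_zero]
  · have hpred : p.1 - 1 ∈ sdesc (n + 1) w := by
      have := bounds p
      let a : SBox (n + 1) := ⟨p.1 - 1, Finset.mem_Icc.2 ⟨by omega, by omega⟩⟩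
      have hap : a ≠ p := fun h => by simp [a, Subtype.ext_iff] at h; omega
      have := one_lt_apply_of_ne hp hap
      exact mem_sdesc.2 ⟨a, p, rfl, by omega, by omega⟩
    rw [Finset.sum_erase_add _ _ hpred]

lemma smaj_rotate_mul (hp : (w p).1 = 1) (hpn : p.1 ≠ n + 1) :
    smaj (n + 1) (rotate n * w) = smaj (n + 1) w + 1 := by
  have := sum_sdesc_rotate_mul hp hpn (fun d => d) rfl
  have := bounds p
  rw [smaj, smaj]
  beta_reduce at *
  omega

lemma ssigma_rotate_mul (hp : (w p).1 = 1) (hpn : p.1 ≠ n + 1) :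
    ssigma (n + 1) (rotate n * w) + (p.1 - 1) * (n + 1 - (p.1 - 1))
      = ssigma (n + 1) w + p.1 * (n + 1 - p.1) :=
  sum_sdesc_rotate_mul hp hpn (fun d => d * (n + 1 - d)) (zero_mul _)

lemma inversionsAvoiding_rotate_mul (hp : (w p).1 = 1) :
    inversionsAvoiding (rotate n * w) p = inversionsAvoiding w p := by
  ext q
  simp only [inversionsAvoiding, inversions, Finset.mem_filter, Finset.mem_univ, true_and]
  constructor
  · rintro ⟨⟨⟨hlt, hinv⟩, h2⟩, h1⟩
    have := one_lt_apply_of_ne hp h1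
    have := one_lt_apply_of_ne hp h2
    rw [rotate_mul_apply_of_ne hp h1, rotate_mul_apply_of_ne hp h2] at hinv
    exact ⟨⟨⟨hlt, by omega⟩, h2⟩, h1⟩
  · rintro ⟨⟨⟨hlt, hinv⟩, h2⟩, h1⟩
    have := one_lt_apply_of_ne hp h1
    have := one_lt_apply_of_ne hp h2
    refine ⟨⟨⟨hlt, ?_⟩, h2⟩, h1⟩
    rw [rotate_mul_apply_of_ne hp h1, rotate_mul_apply_of_ne hp h2]
    omega

/-- Both `σ` and `l` grow by `n + 2 - 2p`. -/
lemma ssigma_sub_slen_rotate_mul (hp : (w p).1 = 1) (hpn : p.1 ≠ n + 1) :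
    (ssigma (n + 1) (rotate n * w) : ℤ) - slen (n + 1) (rotate n * w)
      = (ssigma (n + 1) w : ℤ) - slen (n + 1) w := by
  have hσ := ssigma_rotate_mul hp hpn
  have hl := slen_of_apply_eq_one hp
  have hl' := slen_of_apply_eq_top (rotate_mul_apply_self hp)
  rw [inversionsAvoiding_rotate_mul hp] at hl'
  have := bounds p
  zify [show 1 ≤ p.1 by omega, show p.1 - 1 ≤ n + 1 by omega, show p.1 ≤ n + 1 by omega]
    at hσ hl hl'
  rw [hl, hl']
  linear_combination hσ

end Rotate

section Decomposition

variable {n : ℕ}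

lemma rotate_pow_mul_liftPerm_apply_last (u : Equiv.Perm (SBox n)) {k : ℕ} (hk : k ≤ n) :
    ((rotate n ^ k * liftPerm u) (last n)).1 = n + 1 - k := by
  induction k with
  | zero => simp
  | succ k ih =>
    rw [pow_succ', mul_assoc, Equiv.Perm.mul_apply, rotate_apply_val, ih (by omega),
      if_neg (by omega)]
    omega

lemma exists_apply_eq_one_of_apply_last_ne {w : Equiv.Perm (SBox (n + 1))}
    (hw : (w (last n)).1 ≠ 1) : ∃ p, (w p).1 = 1 ∧ p.1 ≠ n + 1 := by
  let one : SBox (n + 1) := ⟨1, Finset.mem_Icc.2 ⟨le_rfl, by omega⟩⟩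
  refine ⟨w.symm one, by rw [Equiv.apply_symm_apply], fun h => hw ?_⟩
  rw [show last n = w.symm one from Subtype.ext h.symm, Equiv.apply_symm_apply]

lemma smaj_rotate_pow_mul_liftPerm (u : Equiv.Perm (SBox n)) {k : ℕ} (hk : k ≤ n) :
    smaj (n + 1) (rotate n ^ k * liftPerm u) = smaj n u + k := by
  induction k with
  | zero => simp [smaj_liftPerm]
  | succ k ih =>
    obtain ⟨p, hp, hpn⟩ := exists_apply_eq_one_of_apply_last_ne (w := rotate n ^ k * liftPerm u)
      (by rw [rotate_pow_mul_liftPerm_apply_last u (by omega)]; omega)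
    rw [pow_succ', mul_assoc, smaj_rotate_mul hp hpn, ih (by omega), add_assoc]

lemma ssigma_sub_slen_rotate_pow_mul_liftPerm (u : Equiv.Perm (SBox n)) {k : ℕ} (hk : k ≤ n) :
    (ssigma (n + 1) (rotate n ^ k * liftPerm u) : ℤ) - slen (n + 1) (rotate n ^ k * liftPerm u)
      = (ssigma n u : ℤ) - slen n u + smaj n u := by
  induction k with
  | zero =>
    simp only [pow_zero, one_mul, ssigma_liftPerm, slen_liftPerm, Nat.cast_add]
    ring
  | succ k ih =>
    obtain ⟨p, hp, hpn⟩ := exists_apply_eq_one_of_apply_last_ne (w := rotate n ^ k * liftPerm u)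
      (by rw [rotate_pow_mul_liftPerm_apply_last u (by omega)]; omega)
    rw [pow_succ', mul_assoc, ssigma_sub_slen_rotate_mul hp hpn, ih (by omega)]

/-- The exponent is recovered as `k = n + 1 - w (n + 1)`. -/
lemma rotate_pow_mul_liftPerm_bijective :
    Function.Bijective fun uk : Equiv.Perm (SBox n) × Fin (n + 1) =>
      rotate n ^ (uk.2 : ℕ) * liftPerm uk.1 := by
  rw [Fintype.bijective_iff_injective_and_card]
  refine ⟨fun ⟨u, k⟩ ⟨u', k'⟩ h => ?_, ?_⟩
  · have hk : (k : ℕ) = k' := by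
      have := congrArg (fun w : Equiv.Perm (SBox (n + 1)) => (w (last n)).1) h
      simp only [rotate_pow_mul_liftPerm_apply_last _ (Nat.lt_succ_iff.1 k.2),
        rotate_pow_mul_liftPerm_apply_last _ (Nat.lt_succ_iff.1 k'.2)] at this
      omega
    simp only [hk, mul_right_inj] at h
    rw [liftPerm_injective h, Fin.ext hk]
  · simp only [Fintype.card_prod, Fintype.card_perm, Fintype.card_fin, Fintype.card_coe,
      Nat.card_Icc, Nat.add_sub_cancel, Nat.factorial_succ, mul_comm]

end Decomposition

section GeneratingFunction

variable {K : Type*} [Field K]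

def genFun (n : ℕ) (x z : K) : K :=
  ∑ w : Equiv.Perm (SBox n), x ^ ((ssigma n w : ℤ) - slen n w) * z ^ smaj n w

lemma genFun_zero (x z : K) : genFun 0 x z = 1 := by
  have : IsEmpty (SBox 0) := ⟨fun a => by have := bounds a; omega⟩
  simp [genFun, ssigma, slen, smaj, sdesc]

lemma genFun_succ {x : K} (hx : x ≠ 0) (n : ℕ) (z : K) :
    genFun (n + 1) x z = genFun n x (x * z) * ∑ c ∈ Finset.range (n + 1), z ^ c := by
  rw [genFun, ← rotate_pow_mul_liftPerm_bijective.sum_comp, Fintype.sum_prod_type, genFun,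
    Finset.sum_mul]
  refine Finset.sum_congr rfl fun u _ => ?_
  rw [Finset.mul_sum, ← Fin.sum_univ_eq_sum_range]
  refine Finset.sum_congr rfl fun k _ => ?_
  have hk := Nat.lt_succ_iff.1 k.2
  rw [ssigma_sub_slen_rotate_pow_mul_liftPerm u hk, smaj_rotate_pow_mul_liftPerm u hk,
    zpow_add₀ hx, zpow_natCast, pow_add, mul_pow]
  ring

lemma genFun_eq_prod_geom_sum {x : K} (hx : x ≠ 0) (n : ℕ) (z : K) :
    genFun n x z = ∏ i ∈ Finset.range n, ∑ c ∈ Finset.range (n - i), (x ^ i * z) ^ c := by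
  induction n generalizing z with
  | zero => rw [genFun_zero, Finset.prod_range_zero]
  | succ n ih =>
    rw [genFun_succ hx, ih, Finset.prod_range_succ' _ n]
    simp only [Nat.succ_sub_succ, pow_succ, pow_zero, one_mul, mul_assoc, Nat.sub_zero]

lemma sum_srmaj_eq_genFun (n : ℕ) (x z : K) :
    ∑ w : Equiv.Perm (SBox n), x ^ ((ssigma n w : ℤ) - slen n w) * z ^ srmaj n w
      = genFun n x z := by
  refine Fintype.sum_bijective _ reverse_mul_mul_reverse_involutive.bijective _ _ fun w => ?_
  rw [ssigma_reverse_mul_mul_reverse, slen_reverse_mul_mul_reverse,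
    smaj_reverse_mul_mul_reverse]

end GeneratingFunction

end SBox

lemma XX_ne_zero : XX ≠ 0 := fun h =>
  MvPolynomial.X_ne_zero (0 : Fin 2)
    (IsFractionRing.injective (MvPolynomial (Fin 2) ℚ) F2 (h.trans (map_zero _).symm))

lemma XX_pow_mul_ZZ_ne_one (i : ℕ) : XX ^ i * ZZ ≠ 1 := fun h => by
  have hpoly : (MvPolynomial.X 0 ^ i * MvPolynomial.X 1 : MvPolynomial (Fin 2) ℚ) = 1 :=
    IsFractionRing.injective (MvPolynomial (Fin 2) ℚ) F2 (by simpa [XX, ZZ] using h)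
  simpa using congrArg (MvPolynomial.eval 0) hpoly

lemma geom_sum_eq_one_sub_div {K : Type*} [Field K] {q : K} (hq : q ≠ 1) (n : ℕ) :
    ∑ c ∈ Finset.range n, q ^ c = (1 - q ^ n) / (1 - q) := by
  rw [geom_sum_eq hq, ← neg_div_neg_eq, neg_sub, neg_sub]

theorem joint_distribution_type_A_general (n : ℕ) :
    (∑ w : Equiv.Perm (SBox n),
        XX ^ ((ssigma n w : ℤ) - (slen n w : ℤ)) * ZZ ^ smaj n w
      = ∏ i ∈ Finset.range n,
          (1 - (XX ^ i * ZZ) ^ (n - i)) / (1 - XX ^ i * ZZ)) ∧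
    (∑ w : Equiv.Perm (SBox n),
        XX ^ ((ssigma n w : ℤ) - (slen n w : ℤ)) * ZZ ^ srmaj n w
      = ∏ i ∈ Finset.range n,
          (1 - (XX ^ i * ZZ) ^ (n - i)) / (1 - XX ^ i * ZZ)) := by
  have hprod : SBox.genFun n XX ZZ = ∏ i ∈ Finset.range n,
      (1 - (XX ^ i * ZZ) ^ (n - i)) / (1 - XX ^ i * ZZ) := by
    rw [SBox.genFun_eq_prod_geom_sum XX_ne_zero]
    exact Finset.prod_congr rfl fun i _ => geom_sum_eq_one_sub_div (XX_pow_mul_ZZ_ne_one i) _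
  exact ⟨hprod, (SBox.sum_srmaj_eq_genFun n XX ZZ).trans hprod⟩

theorem joint_distribution_type_A (n : ℕ) (hn : 1 ≤ n) :
    (∑ w : Equiv.Perm (SBox n),
        XX ^ ((ssigma n w : ℤ) - (slen n w : ℤ)) * ZZ ^ smaj n w
      = ∏ i ∈ Finset.range n,
          (1 - (XX ^ i * ZZ) ^ (n - i)) / (1 - XX ^ i * ZZ)) ∧
    (∑ w : Equiv.Perm (SBox n),
        XX ^ ((ssigma n w : ℤ) - (slen n w : ℤ)) * ZZ ^ srmaj n w
      = ∏ i ∈ Finset.range n,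
          (1 - (XX ^ i * ZZ) ^ (n - i)) / (1 - XX ^ i * ZZ)) :=
  joint_distribution_type_A_general n
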